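/- (Proposition 2.) Let X ⊂ ℝ^{n_x} be a nonempty compact set, let x : [0,∞) → ℝ^{n_x} be differentiable with x'(t) = f(x(t)) and x(t) ∈ X for all t ≥ 0, and let ẑ : [0,∞) → ℝ^{n_z} be differentiable with ẑ'(t) = A ẑ(t) + B h(x(t)) for all t ≥ 0. Let T̂ : ℝ^{n_x} → ℝ^{n_z} be continuously differentiable with PDE residual R and set R̄ := sup_{x∈X} ‖R(x)‖. Let Z ⊂ ℝ^{n_z} be a set containing T̂(X) and containing ẑ(t) for all t ≥ 0, let T̂* : ℝ^{n_z} → ℝ^{n_x} be Lipschitz with constant L ≥ 0 on Z, and define x̂(t) := T̂*(ẑ(t)) and E := sup_{x∈X} ‖T̂*(T̂(x)) − x‖, assumed finite. Let Q ∈ ℝ^{n_z×n_z} and P ∈ ℝ^{n_z×n_z} be symmetric positive definite with P A + Aᵀ P = −Q. Then limsup_{t→∞} ‖x̂(t) − x(t)‖ ≤ L·√(4·λ_max(P)/(λ_min(Q)·λ_min(P)))·‖Q^{−1/2}P‖·R̄ + E. -/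

import Mathlib

/-!
The estimation error `e = ẑ - T̂ ∘ x` obeys `ė = A e - R(x)`. Along it the Lyapunov function
`V = eᵀ P e` has `V̇ = -eᵀ Q e - 2 eᵀ P R(x)`; writing `eᵀ P R = ⟪Q^{1/2} e, Q^{-1/2} P R⟫`
and using Young's inequality gives `V̇ ≤ -‖Q^{1/2} e‖² / 2 + 2 c²` with `c = ‖Q^{-1/2} P‖ R̄`, hence
`V̇ ≤ -(λ_min Q / (2 λ_max P)) V + 2 c²`. Grönwall bounds `V` by a function tending to
`4 λ_max P c² / λ_min Q`, and `λ_min P ‖e‖² ≤ V` turns this into an asymptotic bound on `‖e‖`.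
Finally `‖T̂*(ẑ) - x‖ ≤ ‖T̂*(ẑ) - T̂*(T̂ x)‖ + ‖T̂*(T̂ x) - x‖ ≤ L ‖e‖ + E`.
-/

open Filter Matrix

/-- Euclidean space `ℝ^n`. -/
abbrev E (n : ℕ) := EuclideanSpace ℝ (Fin n)

/-- Smallest eigenvalue of a (Hermitian) real matrix. -/
noncomputable def lamMin {n : ℕ} (M : Matrix (Fin n) (Fin n) ℝ) : ℝ :=
  if h : M.IsHermitian then ⨅ i, h.eigenvalues i else 0

/-- Largest eigenvalue of a (Hermitian) real matrix. -/
noncomputable def lamMax {n : ℕ} (M : Matrix (Fin n) (Fin n) ℝ) : ℝ :=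
  if h : M.IsHermitian then ⨆ i, h.eigenvalues i else 0

open scoped Classical in
/-- The positive semidefinite square root `M^{1/2}` of a positive semidefinite matrix. -/
noncomputable def matSqrt {n : ℕ} (M : Matrix (Fin n) (Fin n) ℝ) : Matrix (Fin n) (Fin n) ℝ :=
  if h : M.PosSemidef then
    h.1.eigenvectorUnitary.1 * diagonal (fun i => Real.sqrt (h.1.eigenvalues i)) *
      (star h.1.eigenvectorUnitary : Matrix (Fin n) (Fin n) ℝ)
  else 0

/-- `M^{-1/2} := (M^{1/2})⁻¹`. -/
noncomputable def invSqrt {n : ℕ} (M : Matrix (Fin n) (Fin n) ℝ) : Matrix (Fin n) (Fin n) ℝ :=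
  (matSqrt M)⁻¹

/-- Operator norm of a matrix induced by the Euclidean norms. -/
noncomputable def opNorm {m n : ℕ} (M : Matrix (Fin m) (Fin n) ℝ) : ℝ :=
  ‖LinearMap.toContinuousLinearMap (Matrix.toEuclideanLin M)‖

/-- Matrix-vector multiplication as a map between Euclidean spaces. -/
def mv {m n : ℕ} (M : Matrix (Fin m) (Fin n) ℝ) (v : E n) : E m := WithLp.toLp 2 (M.mulVec v)

open scoped Topology

section MatrixVector

variable {m n o : ℕ}

lemma norm_mv_le (M : Matrix (Fin m) (Fin n) ℝ) (v : E n) : ‖mv M v‖ ≤ opNorm M * ‖v‖ :=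
  (LinearMap.toContinuousLinearMap (Matrix.toEuclideanLin M)).le_opNorm v

lemma continuous_mv (M : Matrix (Fin m) (Fin n) ℝ) : Continuous (mv M) :=
  (LinearMap.toContinuousLinearMap (Matrix.toEuclideanLin M)).continuous

lemma HasDerivAt.mv (M : Matrix (Fin m) (Fin n) ℝ) {u : ℝ → E n} {u' : E n} {t : ℝ}
    (hu : HasDerivAt u u' t) : HasDerivAt (fun s => mv M (u s)) (mv M u') t :=
  (LinearMap.toContinuousLinearMap (Matrix.toEuclideanLin M)).hasFDerivAt.comp_hasDerivAt t hu

lemma mv_sub (M : Matrix (Fin m) (Fin n) ℝ) (a b : E n) : mv M (a - b) = mv M a - mv M b := by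
  simp [mv, Matrix.mulVec_sub]

lemma mv_add_left (M N : Matrix (Fin m) (Fin n) ℝ) (a : E n) :
    mv (M + N) a = mv M a + mv N a := by
  simp [mv, Matrix.add_mulVec]

lemma mv_neg_left (M : Matrix (Fin m) (Fin n) ℝ) (a : E n) : mv (-M) a = -mv M a := by
  simp [mv, Matrix.neg_mulVec]

lemma mv_mv (M : Matrix (Fin m) (Fin n) ℝ) (N : Matrix (Fin n) (Fin o) ℝ) (v : E o) :
    mv M (mv N v) = mv (M * N) v := by
  simp [mv, Matrix.mulVec_mulVec]

lemma inner_mv_left (M : Matrix (Fin m) (Fin n) ℝ) (x : E n) (y : E m) :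
    inner ℝ (mv M x) y = inner ℝ x (mv Mᵀ y) := by
  simp only [mv, EuclideanSpace.inner_eq_star_dotProduct, star_trivial]
  rw [Matrix.dotProduct_mulVec, Matrix.mulVec_transpose]

lemma Matrix.IsHermitian.inner_mv_left {M : Matrix (Fin n) (Fin n) ℝ} (hM : M.IsHermitian)
    (x y : E n) : inner ℝ (mv M x) y = inner ℝ x (mv M y) := by
  rw [_root_.inner_mv_left, ← Matrix.conjTranspose_eq_transpose_of_trivial, hM.eq]

end MatrixVector

section Spectral

variable {n : ℕ} {M : Matrix (Fin n) (Fin n) ℝ}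

lemma Matrix.IsHermitian.inner_mv_self_eq_sum (hM : M.IsHermitian) (v : E n) :
    inner ℝ v (mv M v) = ∑ i, hM.eigenvalues i * inner ℝ v (hM.eigenvectorBasis i) ^ 2 := by
  rw [← hM.eigenvectorBasis.sum_inner_mul_inner v (mv M v)]
  refine Finset.sum_congr rfl fun i _ => ?_
  have hb : mv M (hM.eigenvectorBasis i) = hM.eigenvalues i • hM.eigenvectorBasis i :=
    PiLp.ext fun j => by simpa [mv] using congrFun (hM.mulVec_eigenvectorBasis i) j
  rw [← hM.inner_mv_left, hb, real_inner_smul_left, real_inner_comm v]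
  ring

lemma lamMin_mul_norm_sq_le (hM : M.IsHermitian) (v : E n) :
    lamMin M * ‖v‖ ^ 2 ≤ inner ℝ v (mv M v) := by
  rw [hM.inner_mv_self_eq_sum, ← hM.eigenvectorBasis.sum_sq_inner_left v, lamMin, dif_pos hM,
    Finset.mul_sum]
  exact Finset.sum_le_sum fun i _ =>
    mul_le_mul_of_nonneg_right (ciInf_le (Finite.bddBelow_range _) i) (sq_nonneg _)

lemma inner_le_lamMax_mul_norm_sq (hM : M.IsHermitian) (v : E n) :
    inner ℝ v (mv M v) ≤ lamMax M * ‖v‖ ^ 2 := by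
  rw [hM.inner_mv_self_eq_sum, ← hM.eigenvectorBasis.sum_sq_inner_left v, lamMax, dif_pos hM,
    Finset.mul_sum]
  exact Finset.sum_le_sum fun i _ =>
    mul_le_mul_of_nonneg_right (le_ciSup (Finite.bddAbove_range _) i) (sq_nonneg _)

lemma lamMin_pos [Nonempty (Fin n)] (hM : M.PosDef) : 0 < lamMin M := by
  obtain ⟨i, hi⟩ := exists_eq_ciInf_of_finite (f := hM.1.eigenvalues)
  rw [lamMin, dif_pos hM.1, ← hi]
  exact hM.eigenvalues_pos i

lemma lamMax_pos [Nonempty (Fin n)] (hM : M.PosDef) : 0 < lamMax M := by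
  let i : Fin n := Classical.arbitrary _
  rw [lamMax, dif_pos hM.1]
  exact (hM.eigenvalues_pos i).trans_le (le_ciSup (Finite.bddAbove_range _) i)

lemma isHermitian_matSqrt (hM : M.PosSemidef) : (matSqrt M).IsHermitian := by
  simp [matSqrt, dif_pos hM, Matrix.IsHermitian, Matrix.mul_assoc,
    Matrix.star_eq_conjTranspose]

lemma matSqrt_mul_self (hM : M.PosSemidef) : matSqrt M * matSqrt M = M := by
  set U := hM.1.eigenvectorUnitary
  set D := diagonal fun i => Real.sqrt (hM.1.eigenvalues i)
  have hUU : (star U : Matrix (Fin n) (Fin n) ℝ) * U.1 = 1 := Unitary.coe_star_mul_self U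
  have hDD : D * D = diagonal hM.1.eigenvalues := by
    rw [diagonal_mul_diagonal]
    exact congrArg diagonal (funext fun i => Real.mul_self_sqrt (hM.eigenvalues_nonneg i))
  have hs := hM.1.spectral_theorem
  rw [RCLike.ofReal_real_eq_id, Function.id_comp, Unitary.conjStarAlgAut_apply] at hs
  calc matSqrt M * matSqrt M
      = U.1 * D * ((star U : Matrix (Fin n) (Fin n) ℝ) * U.1) * D * (star U : Matrix _ _ ℝ) := by
        simp only [matSqrt, dif_pos hM, Matrix.mul_assoc]; rfl
    _ = M := by rw [hUU, Matrix.mul_one, Matrix.mul_assoc U.1, hDD, ← hs]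

lemma matSqrt_mul_invSqrt (hM : M.PosDef) : matSqrt M * invSqrt M = 1 := by
  refine Matrix.mul_nonsing_inv _ ((isUnit_iff_ne_zero).2 fun hdet => hM.det_pos.ne' ?_)
  rw [← matSqrt_mul_self hM.posSemidef, Matrix.det_mul, hdet, zero_mul]

lemma inner_mv_self_eq_norm_sq_matSqrt (hM : M.PosSemidef) (v : E n) :
    inner ℝ v (mv M v) = ‖mv (matSqrt M) v‖ ^ 2 := by
  have h := (isHermitian_matSqrt hM).inner_mv_left v (mv (matSqrt M) v)
  rw [mv_mv, matSqrt_mul_self hM] at h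
  rw [← h, real_inner_self_eq_norm_sq]

lemma abs_inner_mv_le (hM : M.PosDef) (P : Matrix (Fin n) (Fin n) ℝ) (v w : E n) :
    |inner ℝ v (mv P w)| ≤ ‖mv (matSqrt M) v‖ * (opNorm (invSqrt M * P) * ‖w‖) := by
  have hsplit : inner ℝ v (mv P w) = inner ℝ (mv (matSqrt M) v) (mv (invSqrt M * P) w) := by
    rw [(isHermitian_matSqrt hM.posSemidef).inner_mv_left, mv_mv, ← Matrix.mul_assoc,
      matSqrt_mul_invSqrt hM, Matrix.one_mul]
  rw [hsplit]
  exact (abs_real_inner_le_norm _ _).trans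
    (mul_le_mul_of_nonneg_left (norm_mv_le _ _) (norm_nonneg _))

end Spectral

section Lyapunov

variable {n : ℕ} {A P Q : Matrix (Fin n) (Fin n) ℝ}

lemma lyapunov_deriv_eq (hP : P.IsHermitian) (hLyap : P * A + Aᵀ * P = -Q) (v w : E n) :
    inner ℝ v (mv P (mv A v - w)) + inner ℝ (mv A v - w) (mv P v)
      = -inner ℝ v (mv Q v) - 2 * inner ℝ v (mv P w) := by
  have hA : inner ℝ v (mv P (mv A v)) + inner ℝ (mv A v) (mv P v) = -inner ℝ v (mv Q v) := by
    rw [inner_mv_left A v, mv_mv, mv_mv, ← inner_add_right, ← mv_add_left, hLyap, mv_neg_left,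
      inner_neg_right]
  have hw : inner ℝ w (mv P v) = inner ℝ v (mv P w) := by
    rw [← hP.inner_mv_left, real_inner_comm]
  rw [mv_sub, inner_sub_right, inner_sub_left]
  linarith

lemma lyapunov_deriv_le [Nonempty (Fin n)] (hQ : Q.PosDef) (hP : P.PosDef)
    (hLyap : P * A + Aᵀ * P = -Q) (v w : E n) {ρ : ℝ} (hw : ‖w‖ ≤ ρ) :
    inner ℝ v (mv P (mv A v - w)) + inner ℝ (mv A v - w) (mv P v)
      ≤ -(lamMin Q / (2 * lamMax P)) * inner ℝ v (mv P v)
        + 2 * (opNorm (invSqrt Q * P) * ρ) ^ 2 := by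
  set a := ‖mv (matSqrt Q) v‖
  set c := opNorm (invSqrt Q * P) * ρ
  have hcross : |inner ℝ v (mv P w)| ≤ a * c :=
    (abs_inner_mv_le hQ P v w).trans <| mul_le_mul_of_nonneg_left
      (mul_le_mul_of_nonneg_left hw (norm_nonneg _)) (norm_nonneg _)
  have hQv : inner ℝ v (mv Q v) = a ^ 2 := inner_mv_self_eq_norm_sq_matSqrt hQ.posSemidef v
  have hdecay : lamMin Q / (2 * lamMax P) * inner ℝ v (mv P v) ≤ a ^ 2 / 2 := by
    have hPmax := lamMax_pos hP
    calc lamMin Q / (2 * lamMax P) * inner ℝ v (mv P v)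
        ≤ lamMin Q / (2 * lamMax P) * (lamMax P * ‖v‖ ^ 2) :=
          mul_le_mul_of_nonneg_left (inner_le_lamMax_mul_norm_sq hP.1 v)
            (div_nonneg (lamMin_pos hQ).le (by positivity))
      _ = lamMin Q * ‖v‖ ^ 2 / 2 := by field_simp
      _ ≤ a ^ 2 / 2 := by rw [← hQv]; linarith [lamMin_mul_norm_sq_le hQ.1 v]
  rw [lyapunov_deriv_eq hP.1 hLyap, hQv]
  nlinarith [abs_le.1 hcross, sq_nonneg (a - 2 * c)]

end Lyapunov

lemma le_gronwallBound_of_hasDerivAt {V V' : ℝ → ℝ} {K β : ℝ}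
    (hV : ∀ t ≥ 0, HasDerivAt V (V' t) t) (hbound : ∀ t ≥ 0, V' t ≤ K * V t + β)
    {t : ℝ} (ht : 0 ≤ t) : V t ≤ gronwallBound (V 0) K β t := by
  have h := le_gronwallBound_of_liminf_deriv_right_le (a := 0) (b := t)
    (fun s hs => (hV s hs.1).continuousAt.continuousWithinAt)
    (fun s hs _ hr => (hV s hs.1).hasDerivWithinAt.liminf_right_slope_le hr) le_rfl
    (fun s hs => hbound s hs.1) t ⟨ht, le_rfl⟩
  rwa [sub_zero] at h

lemma tendsto_gronwallBound_neg {k : ℝ} (hk : 0 < k) (δ β : ℝ) :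
    Tendsto (gronwallBound δ (-k) β) atTop (𝓝 (β / k)) := by
  have hexp : Tendsto (fun t => Real.exp (-k * t)) atTop (𝓝 0) := by
    simpa only [neg_mul, Function.comp_def, id] using
      Real.tendsto_exp_neg_atTop_nhds_zero.comp (tendsto_id.const_mul_atTop hk)
  rw [gronwallBound_of_K_ne_0 (neg_ne_zero.2 hk.ne')]
  convert (hexp.const_mul δ).add ((hexp.sub_const 1).const_mul (β / -k)) using 2
  field_simp
  ring

lemma exists_tendsto_bound_of_lyapunov {n : ℕ} {A P Q : Matrix (Fin n) (Fin n) ℝ}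
    (hQ : Q.PosDef) (hP : P.PosDef) (hLyap : P * A + Aᵀ * P = -Q) {e w : ℝ → E n} {ρ : ℝ}
    (he : ∀ t ≥ 0, HasDerivAt e (mv A (e t) - w t) t) (hw : ∀ t ≥ 0, ‖w t‖ ≤ ρ) :
    ∃ u : ℝ → ℝ, Tendsto u atTop
        (𝓝 (Real.sqrt (4 * lamMax P / (lamMin Q * lamMin P)) * (opNorm (invSqrt Q * P) * ρ)))
      ∧ ∀ t ≥ 0, ‖e t‖ ≤ u t := by
  set c := opNorm (invSqrt Q * P) * ρ
  have hc : 0 ≤ c := mul_nonneg (norm_nonneg _) ((norm_nonneg _).trans (hw 0 le_rfl))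
  -- In dimension `0` the eigenvalue bounds are junk (`lamMin = lamMax = 0`), but `e ≡ 0`.
  rcases isEmpty_or_nonempty (Fin n) with hn | hn
  · refine ⟨fun _ => _, tendsto_const_nhds, fun t _ => ?_⟩
    rw [show e t = 0 from PiLp.ext fun i => isEmptyElim i, norm_zero]
    positivity
  set V := fun t => inner ℝ (e t) (mv P (e t))
  set k := lamMin Q / (2 * lamMax P)
  have hk : 0 < k := div_pos (lamMin_pos hQ) (mul_pos two_pos (lamMax_pos hP))
  have hPmin := lamMin_pos hP
  have hV : ∀ t ≥ 0, V t ≤ gronwallBound (V 0) (-k) (2 * c ^ 2) t := fun t ht =>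
    le_gronwallBound_of_hasDerivAt (fun s hs => (he s hs).inner ℝ ((he s hs).mv P))
      (fun s hs => (lyapunov_deriv_le hQ hP hLyap (e s) (w s) (hw s hs)).trans_eq (by ring)) ht
  refine ⟨fun t => Real.sqrt (gronwallBound (V 0) (-k) (2 * c ^ 2) t / lamMin P), ?_,
    fun t ht => ?_⟩
  · convert ((tendsto_gronwallBound_neg hk (V 0) _).div_const (lamMin P)).sqrt using 2
    rw [show 2 * c ^ 2 / k / lamMin P = 4 * lamMax P / (lamMin Q * lamMin P) * c ^ 2 by
      simp only [k]; field_simp; ring, Real.sqrt_mul' _ (sq_nonneg c), Real.sqrt_sq hc]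
  · refine Real.le_sqrt_of_sq_le ((le_div_iff₀ hPmin).2 ?_)
    linarith [lamMin_mul_norm_sq_le hP.1 (e t), hV t ht]

lemma limsup_le_of_eventually_le_of_tendsto {α : Type*} {l : Filter α} [l.NeBot] {f g : α → ℝ}
    {c : ℝ} (hf : IsBoundedUnder (· ≥ ·) l f) (hfg : f ≤ᶠ[l] g) (hg : Tendsto g l (𝓝 c)) :
    limsup f l ≤ c :=
  (limsup_le_limsup hfg hf.isCoboundedUnder_le hg.isBoundedUnder_le).trans_eq hg.limsup_eq

lemma hasDerivAt_sub_comp_of_residual {nx ny nz : ℕ} {f : E nx → E nx} {h : E nx → E ny}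
    {A : Matrix (Fin nz) (Fin nz) ℝ} {B : Matrix (Fin nz) (Fin ny) ℝ} {T R : E nx → E nz}
    {x : ℝ → E nx} {zh : ℝ → E nz} {t : ℝ} (hT : DifferentiableAt ℝ T (x t))
    (hx : HasDerivAt x (f (x t)) t) (hz : HasDerivAt zh (mv A (zh t) + mv B (h (x t))) t)
    (hR : R (x t) = fderiv ℝ T (x t) (f (x t)) - mv A (T (x t)) - mv B (h (x t))) :
    HasDerivAt (fun s => zh s - T (x s)) (mv A (zh t - T (x t)) - R (x t)) t := by
  have hd := hz.sub (hT.hasFDerivAt.comp_hasDerivAt t hx)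
  rwa [show mv A (zh t) + mv B (h (x t)) - fderiv ℝ T (x t) (f (x t))
      = mv A (zh t - T (x t)) - R (x t) by rw [hR, mv_sub]; abel] at hd

theorem stmt7_general {nx ny nz : ℕ}
    (f : E nx → E nx) (hf : Continuous f)
    (h : E nx → E ny) (hh : Continuous h)
    (A : Matrix (Fin nz) (Fin nz) ℝ) (B : Matrix (Fin nz) (Fin ny) ℝ)
    (X : Set (E nx)) (hXc : IsCompact X)
    (x : ℝ → E nx) (hx : ∀ t ≥ (0:ℝ), HasDerivAt x (f (x t)) t)
    (hxX : ∀ t ≥ (0:ℝ), x t ∈ X)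
    (zh : ℝ → E nz)
    (hz : ∀ t ≥ (0:ℝ), HasDerivAt zh (mv A (zh t) + mv B (h (x t))) t)
    (T : E nx → E nz) (hT : ContDiff ℝ 1 T)
    (R : E nx → E nz)
    (hR : ∀ p, R p = fderiv ℝ T p (f p) - mv A (T p) - mv B (h p))
    (Rbar : ℝ) (hRbar : Rbar = sSup ((fun p => ‖R p‖) '' X))
    (Z : Set (E nz)) (hTZ : T '' X ⊆ Z) (hzZ : ∀ t ≥ (0:ℝ), zh t ∈ Z)
    (Ts : E nz → E nx) (L : ℝ) (hL : 0 ≤ L)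
    (hLip : ∀ z₁ ∈ Z, ∀ z₂ ∈ Z, ‖Ts z₁ - Ts z₂‖ ≤ L * ‖z₁ - z₂‖)
    (Err : ℝ) (hErr : Err = sSup ((fun p => ‖Ts (T p) - p‖) '' X))
    (hbdd : BddAbove ((fun p => ‖Ts (T p) - p‖) '' X))
    (Q P : Matrix (Fin nz) (Fin nz) ℝ) (hQ : Q.PosDef) (hP : P.PosDef)
    (hLyap : P * A + Aᵀ * P = -Q) :
    limsup (fun t => ‖Ts (zh t) - x t‖) atTop ≤
      L * Real.sqrt (4 * lamMax P / (lamMin Q * lamMin P)) * opNorm (invSqrt Q * P) * Rbar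
        + Err := by
  have hRcont : Continuous R := by
    rw [funext hR]
    exact (((hT.continuous_fderiv one_ne_zero).clm_apply hf).sub
      ((continuous_mv A).comp hT.continuous)).sub ((continuous_mv B).comp hh)
  have hRle : ∀ p ∈ X, ‖R p‖ ≤ Rbar := fun p hp =>
    hRbar ▸ le_csSup (hXc.bddAbove_image hRcont.norm.continuousOn) ⟨p, hp, rfl⟩
  obtain ⟨u, hu, hue⟩ := exists_tendsto_bound_of_lyapunov hQ hP hLyap
    (fun t ht => hasDerivAt_sub_comp_of_residual (hT.differentiable one_ne_zero _) (hx t ht)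
      (hz t ht) (hR (x t)))
    (fun t ht => hRle _ (hxX t ht))
  refine (limsup_le_of_eventually_le_of_tendsto (isBoundedUnder_of ⟨0, fun t => norm_nonneg _⟩)
    ?_ ((hu.const_mul L).add_const Err)).trans_eq (by ring)
  filter_upwards [eventually_ge_atTop 0] with t ht
  calc ‖Ts (zh t) - x t‖ ≤ ‖Ts (zh t) - Ts (T (x t))‖ + ‖Ts (T (x t)) - x t‖ :=
        norm_sub_le_norm_sub_add_norm_sub _ _ _
    _ ≤ L * ‖zh t - T (x t)‖ + Err :=
        add_le_add (hLip _ (hzZ t ht) _ (hTZ ⟨x t, hxX t ht, rfl⟩))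
          (hErr ▸ le_csSup hbdd ⟨x t, hxX t ht, rfl⟩)
    _ ≤ L * u t + Err := by gcongr; exact hue t ht

theorem stmt7 {nx ny nz : ℕ}
    (f : E nx → E nx) (hf : Continuous f)
    (h : E nx → E ny) (hh : Continuous h)
    (A : Matrix (Fin nz) (Fin nz) ℝ) (B : Matrix (Fin nz) (Fin ny) ℝ)
    (X : Set (E nx)) (hXne : X.Nonempty) (hXc : IsCompact X)
    (x : ℝ → E nx) (hx : ∀ t ≥ (0:ℝ), HasDerivAt x (f (x t)) t)
    (hxX : ∀ t ≥ (0:ℝ), x t ∈ X)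
    (zh : ℝ → E nz)
    (hz : ∀ t ≥ (0:ℝ), HasDerivAt zh (mv A (zh t) + mv B (h (x t))) t)
    (T : E nx → E nz) (hT : ContDiff ℝ 1 T)
    (R : E nx → E nz)
    (hR : ∀ p, R p = fderiv ℝ T p (f p) - mv A (T p) - mv B (h p))
    (Rbar : ℝ) (hRbar : Rbar = sSup ((fun p => ‖R p‖) '' X))
    (Z : Set (E nz)) (hTZ : T '' X ⊆ Z) (hzZ : ∀ t ≥ (0:ℝ), zh t ∈ Z)
    (Ts : E nz → E nx) (L : ℝ) (hL : 0 ≤ L)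
    (hLip : ∀ z₁ ∈ Z, ∀ z₂ ∈ Z, ‖Ts z₁ - Ts z₂‖ ≤ L * ‖z₁ - z₂‖)
    (Err : ℝ) (hErr : Err = sSup ((fun p => ‖Ts (T p) - p‖) '' X))
    (hbdd : BddAbove ((fun p => ‖Ts (T p) - p‖) '' X))
    (Q P : Matrix (Fin nz) (Fin nz) ℝ) (hQ : Q.PosDef) (hP : P.PosDef)
    (hLyap : P * A + Aᵀ * P = -Q) :
    limsup (fun t => ‖Ts (zh t) - x t‖) atTop ≤
      L * Real.sqrt (4 * lamMax P / (lamMin Q * lamMin P)) * opNorm (invSqrt Q * P) * Rbar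
        + Err :=
  stmt7_general f hf h hh A B X hXc x hx hxX zh hz T hT R hR Rbar hRbar Z hTZ hzZ Ts L hL hLip Err
    hErr hbdd Q P hQ hP hLyap
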